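/- arXiv:1306.2291 — 2 statements merged into one kernel-verified Lean document; each statement's English description precedes it below -/
import Mathlib

section
/- For every set S of ω-sharing groups and every idempotent substitution θ, the sequential abstract unification and the parallel abstract unification coincide: mgu_ω(S,θ) = mgu_p(S,θ). -/
open Classical

/-- First-order terms over a signature `Sig` with arity function `ar`,
    with variables drawn from `ℕ` (a countably infinite set). -/
inductive FTerm (Sig : Type) (ar : Sig → ℕ) : Type where
  | var : ℕ → FTerm Sig ar
  | app : (f : Sig) → (Fin (ar f) → FTerm Sig ar) → FTerm Sig ar

variable {Sig : Type} {ar : Sig → ℕ}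

namespace FTerm

/-- Number of occurrences of the variable `v` in a term. -/
def occ (v : ℕ) : FTerm Sig ar → ℕ
  | var w => if w = v then 1 else 0
  | app _ ts => ∑ i, occ v (ts i)

/-- Application of a substitution (a total map from variables to terms) to a term. -/
def subst (δ : ℕ → FTerm Sig ar) : FTerm Sig ar → FTerm Sig ar
  | var v => δ v
  | app f ts => app f (fun i => (ts i).subst δ)

end FTerm

/-- Domain of a substitution. -/
def domS (θ : ℕ → FTerm Sig ar) : Set ℕ := {x | θ x ≠ FTerm.var x}

/-- Set of variables occurring in a term. -/
def varsT (t : FTerm Sig ar) : Set ℕ := {v | FTerm.occ v t ≠ 0}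

/-- Range of a substitution. -/
def rngS (θ : ℕ → FTerm Sig ar) : Set ℕ := ⋃ x ∈ domS θ, varsT (θ x)

/-- Variables of a substitution. -/
def varsS (θ : ℕ → FTerm Sig ar) : Set ℕ := domS θ ∪ rngS θ

/-- A substitution is idempotent iff its domain and range are disjoint. -/
def Idem (θ : ℕ → FTerm Sig ar) : Prop := domS θ ∩ rngS θ = ∅

/-- Multiplicity `χ(B,t)` of an ω-sharing group `B` in a term `t`. -/
def chi (B : ℕ →₀ ℕ) (t : FTerm Sig ar) : ℕ := ∑ v ∈ B.support, B v * FTerm.occ v t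

/-- A parallel sharing graph for a set `S` of ω-sharing groups and an
    (idempotent) substitution `θ`.  The layers are indexed by the variables in
    the domain of `θ` (the function `layer` assigns to each edge its layer, so
    the edge sets of different layers are automatically pairwise disjoint). -/
structure PSG (Sig : Type) (ar : Sig → ℕ) (S : Set (ℕ →₀ ℕ)) (θ : ℕ → FTerm Sig ar) where
  N : Type
  fintypeN : Fintype N
  nonemptyN : Nonempty N
  E : Type
  fintypeE : Fintype E
  layer : E → ℕ
  src : E → N
  tgt : E → N
  label : N → (ℕ →₀ ℕ)
  label_mem : ∀ n, label n ∈ S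
  layer_mem : ∀ e, layer e ∈ domS θ
  out_deg : ∀ (n : N), ∀ x ∈ domS θ,
    Nat.card {e : E // layer e = x ∧ src e = n} = chi (label n) (FTerm.var x : FTerm Sig ar)
  in_deg : ∀ (n : N), ∀ x ∈ domS θ,
    Nat.card {e : E // layer e = x ∧ tgt e = n} = chi (label n) (θ x)
  conn : ∀ a b : N, Relation.ReflTransGen
    (fun a b => ∃ e : E, (src e = a ∧ tgt e = b) ∨ (src e = b ∧ tgt e = a)) a b

attribute [instance] PSG.fintypeN PSG.fintypeE PSG.nonemptyN

/-- The resultant ω-sharing group of a parallel sharing graph. -/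
noncomputable def PSG.res {S : Set (ℕ →₀ ℕ)} {θ : ℕ → FTerm Sig ar}
    (G : PSG Sig ar S θ) : ℕ →₀ ℕ := ∑ n : G.N, G.label n

/-- Parallel abstract unification. -/
def mguP (S : Set (ℕ →₀ ℕ)) (θ : ℕ → FTerm Sig ar) : Set (ℕ →₀ ℕ) :=
  { B | ∃ G : PSG Sig ar S θ, G.res = B }

/-- The single-binding substitution `{x/t}`. -/
def sbind (x : ℕ) (t : FTerm Sig ar) : ℕ → FTerm Sig ar :=
  fun v => if v = x then t else FTerm.var v

/-- The substitution determined by a list of bindings `[(x₁,t₁),…,(x_p,t_p)]`. -/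
def toSubst : List (ℕ × FTerm Sig ar) → ℕ → FTerm Sig ar
  | [], v => FTerm.var v
  | (x, t) :: l, v => if v = x then t else toSubst l v

/-- Sequential abstract unification: `mgu_ω(S,ε) = S` and
    `mgu_ω(S, {x/t} ∪ θ) = mgu_ω(mgu_p(S,{x/t}), θ)`. -/
def mguSeq (S : Set (ℕ →₀ ℕ)) : List (ℕ × FTerm Sig ar) → Set (ℕ →₀ ℕ)
  | [] => S
  | (x, t) :: l => mguSeq (mguP S (sbind x t)) l

/-!
Everything rests on splitting off one binding: if `θ = σ[x ↦ t]` with `x ∉ dom σ`, then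
`mgu_p(S, θ) = mgu_p(mgu_p(S, {x/t}), σ)`, and the theorem follows by induction on the list of
bindings. Given a parallel sharing graph for `θ`, collapse every connected component of its
layer-`x` edges to one node labelled by the sum of its labels: the components are sharing graphs
for `{x/t}`, and by additivity of `χ` the collapsed graph is one for `σ`. Conversely, given a
sharing graph `G₂` for `σ` whose node `n` is the resultant of a graph `H n` for `{x/t}`, expand
every `n` into `H n` and reattach the edges of `G₂` at `n` to the nodes `u` of `H n`, each `u`
receiving exactly `χ(label u, ·)` of them; this is possible because these numbers add up to the
degree of `n`, again by additivity of `χ`.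
-/

open Relation

theorem chi_sum {ι : Type*} (s : Finset ι) (B : ι → ℕ →₀ ℕ) (t : FTerm Sig ar) :
    chi (∑ i ∈ s, B i) t = ∑ i ∈ s, chi (B i) t :=
  (Finsupp.sum_finsetSum_index (h := fun v k => k * FTerm.occ v t) (fun _ => zero_mul _)
    (fun _ _ _ => add_mul _ _ _)).symm

section Cardinality

variable {α β E N Q : Type*}

theorem Nat.card_subtype_subtype {p : α → Prop} {q : Subtype p → Prop} {r : α → Prop}
    (hqr : ∀ a, q a ↔ r a.1) (hrp : ∀ a, r a → p a) :
    Nat.card (Subtype q) = Nat.card (Subtype r) :=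
  Nat.card_congr ((Equiv.subtypeEquivRight hqr).trans (Equiv.subtypeSubtypeEquivSubtype (hrp _)))

theorem Nat.card_subtype_sum [Finite α] [Finite β] (p : α ⊕ β → Prop) :
    Nat.card (Subtype p) = Nat.card {a // p (.inl a)} + Nat.card {b // p (.inr b)} := by
  rw [Nat.card_congr Equiv.subtypeSum, Nat.card_sum]

theorem Nat.card_subtype_sigmaMap_eq {E N : α → Type*} (s : ∀ a, E a → N a) (a : α) (u : N a) :
    Nat.card {z : Σ a, E a // Sigma.map id s z = ⟨a, u⟩} = Nat.card {e : E a // s a e = u} := by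
  refine (Nat.card_eq_of_bijective (fun e => ⟨⟨a, e.1⟩, by rw [Sigma.map, e.2]; rfl⟩) ⟨?_, ?_⟩).symm
  · intro e e' h
    exact Subtype.ext (eq_of_heq (Sigma.mk.inj_iff.mp (congrArg Subtype.val h)).2)
  · rintro ⟨⟨b, e⟩, h⟩
    obtain ⟨rfl, h⟩ := Sigma.mk.inj_iff.mp h
    exact ⟨⟨e, eq_of_heq h⟩, rfl⟩

theorem Nat.card_subtype_comp_eq_sum [Finite E] [Fintype N] [DecidableEq Q] (P : E → Prop)
    (f : E → N) (g : N → Q) (q : Q) :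
    Nat.card {e // P e ∧ g (f e) = q} = ∑ n : {n // g n = q}, Nat.card {e // P e ∧ f e = n} := by
  rw [← Nat.card_sigma]
  exact Nat.card_congr
    { toFun e := ⟨⟨f e.1, e.2.2⟩, e.1, e.2.1, rfl⟩
      invFun z := ⟨z.2.1, z.2.2.1, by rw [z.2.2.2]; exact z.1.2⟩
      left_inv _ := rfl
      right_inv := by rintro ⟨⟨n, hn⟩, e, he, hfe⟩; obtain rfl : f e = n := hfe; rfl }

theorem exists_sigma_lift_of_card_fiber {C K : Type*} {U : K → Type*} [Finite E]
    [∀ k, Fintype (U k)] (c : E → C) (f : E → K) (d : C → (Σ k, U k) → ℕ)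
    (h : ∀ i k, Nat.card {e // c e = i ∧ f e = k} = ∑ u, d i ⟨k, u⟩) :
    ∃ g : E → Σ k, U k, (∀ e, (g e).1 = f e) ∧
      ∀ i w, Nat.card {e // c e = i ∧ g e = w} = d i w := by
  -- each fiber of `(c, f)` is matched with `d i ⟨k, u⟩` copies of every `u : U k`
  have ψ i k : {e // c e = i ∧ f e = k} ≃ Σ u : U k, Fin (d i ⟨k, u⟩) :=
    (Finite.card_eq.mp (by rw [h, Nat.card_sigma]; simp)).some
  let g e : Σ k, U k := ⟨f e, (ψ (c e) (f e) ⟨e, rfl, rfl⟩).1⟩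
  have hg : ∀ i k (z : {e // c e = i ∧ f e = k}), g z.1 = ⟨k, (ψ i k z).1⟩ := by
    rintro i k ⟨e, rfl, rfl⟩; rfl
  refine ⟨g, fun _ => rfl, fun i ⟨k, u⟩ => ?_⟩
  calc Nat.card {e // c e = i ∧ g e = ⟨k, u⟩}
      = Nat.card {z : {e // c e = i ∧ f e = k} // (ψ i k z).1 = u} :=
        (Nat.card_subtype_subtype (fun z => by simp [hg, z.2.1])
          (fun e he => ⟨he.1, congrArg Sigma.fst he.2⟩)).symm
    _ = Nat.card {w : Σ u' : U k, Fin (d i ⟨k, u'⟩) // w.1 = u} :=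
        Nat.card_congr ((ψ i k).subtypeEquiv fun _ => Iff.rfl)
    _ = d i ⟨k, u⟩ := by rw [Nat.card_congr (Equiv.sigmaSubtype _)]; simp

end Cardinality

section Connectivity

variable {α β E N : Type*}

/-- `PSG.conn` says that `ReflTransGen (EdgeAdj G.src G.tgt)` is total, definitionally. -/
def EdgeAdj (src tgt : E → N) (a b : N) : Prop :=
  ∃ e, (src e = a ∧ tgt e = b) ∨ (src e = b ∧ tgt e = a)

instance (src tgt : E → N) : Std.Symm (EdgeAdj src tgt) :=
  ⟨fun _ _ ⟨e, h⟩ => ⟨e, h.symm⟩⟩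

theorem Relation.ReflTransGen.restrict {r : α → α → Prop} {p : α → Prop}
    {r' : Subtype p → Subtype p → Prop}
    (h : ∀ a b (ha : p a), r a b → ∃ hb : p b, r' ⟨a, ha⟩ ⟨b, hb⟩) {a b : α}
    (hab : ReflTransGen r a b) (ha : p a) (hb : p b) : ReflTransGen r' ⟨a, ha⟩ ⟨b, hb⟩ := by
  induction hab using ReflTransGen.head_induction_on with
  | refl => rfl
  | head hac _ ih =>
    obtain ⟨hc, hr⟩ := h _ _ ha hac
    exact .head hr (ih hc)

theorem Relation.ReflTransGen.of_fibers {π : α → β} {r : α → α → Prop} {s : β → β → Prop}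
    (hfiber : ∀ a a', π a = π a' → ReflTransGen r a a')
    (hlift : ∀ b b', s b b' → ∃ a a', π a = b ∧ π a' = b' ∧ r a a') {a a' : α}
    (h : ReflTransGen s (π a) (π a')) : ReflTransGen r a a' := by
  suffices ∀ b, ReflTransGen s (π a) b → ∀ a', π a' = b → ReflTransGen r a a' from
    this _ h a' rfl
  intro b hb
  induction hb with
  | refl => exact fun a' h => hfiber a a' h.symm
  | tail _ hstep ih =>
    obtain ⟨a₁, a₂, h₁, h₂, hr⟩ := hlift _ _ hstep
    exact fun a' h => (ih a₁ h₁).trans (.head hr (hfiber a₂ a' (h₂.trans h.symm)))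

end Connectivity

section Substitutions

variable {σ : ℕ → FTerm Sig ar} {x y : ℕ} {t : FTerm Sig ar}

theorem domS_var : domS (FTerm.var : ℕ → FTerm Sig ar) = ∅ := by
  simp [domS]

theorem domS_update (hσ : σ x = .var x) (ht : t ≠ .var x) :
    domS (Function.update σ x t) = insert x (domS σ) := by
  ext y
  by_cases hy : y = x
  · subst hy; simp [domS, ht]
  · simp [domS, hy]

theorem mem_domS_update (hσ : σ x = .var x) (ht : t ≠ .var x) (hy : y ∈ domS σ) :
    y ∈ domS (Function.update σ x t) := by
  rw [domS_update hσ ht]; exact Set.mem_insert_of_mem x hy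

theorem ne_of_mem_domS (hσ : σ x = .var x) (hy : y ∈ domS σ) : y ≠ x := by
  rintro rfl; exact hy hσ

theorem sbind_eq_update (x : ℕ) (t : FTerm Sig ar) : sbind x t = Function.update .var x t := by
  funext v; simp [sbind, Function.update_apply]

theorem domS_sbind (ht : t ≠ .var x) : domS (sbind x t) = {x} := by
  simp [sbind_eq_update, domS_update rfl ht, domS_var]

theorem toSubst_cons (x : ℕ) (t : FTerm Sig ar) (l : List (ℕ × FTerm Sig ar)) :
    toSubst ((x, t) :: l) = Function.update (toSubst l) x t := by
  funext v; simp [toSubst, Function.update_apply]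

theorem toSubst_apply_of_not_mem {l : List (ℕ × FTerm Sig ar)} (h : x ∉ l.map Prod.fst) :
    toSubst l x = .var x := by
  induction l with
  | nil => rfl
  | cons p l ih =>
    obtain ⟨y, s⟩ := p
    simp only [List.map_cons, List.mem_cons, not_or] at h
    simp [toSubst, h.1, ih h.2]

end Substitutions

theorem mguP_of_domS_eq_empty {S : Set (ℕ →₀ ℕ)} {θ : ℕ → FTerm Sig ar} (hθ : domS θ = ∅) :
    mguP S θ = S := by
  ext B
  constructor
  · rintro ⟨G, rfl⟩
    have : IsEmpty G.E := ⟨fun e => by simpa [hθ] using G.layer_mem e⟩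
    have : Subsingleton G.N := ⟨fun a b =>
      (G.conn a b).cases_head.resolve_right fun ⟨_, ⟨e, _⟩, _⟩ => isEmptyElim e⟩
    obtain ⟨n⟩ := G.nonemptyN
    rw [PSG.res, Fintype.sum_subsingleton _ n]
    exact G.label_mem n
  · intro hB
    refine ⟨{
      N := PUnit
      fintypeN := inferInstance
      nonemptyN := inferInstance
      E := PEmpty
      fintypeE := inferInstance
      layer := PEmpty.elim
      src := PEmpty.elim
      tgt := PEmpty.elim
      label := fun _ => B
      label_mem := fun _ => hB
      layer_mem := fun e => e.elim
      out_deg := by simp [hθ]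
      in_deg := by simp [hθ]
      conn := fun _ _ => .refl }, ?_⟩
    simp [PSG.res]

namespace PSG

variable {S : Set (ℕ →₀ ℕ)} {θ σ : ℕ → FTerm Sig ar} {x : ℕ} {t : FTerm Sig ar}

section Decompose

variable (G : PSG Sig ar S θ)

def layerSetoid (x : ℕ) : Setoid G.N :=
  EqvGen.setoid (EdgeAdj (fun e : {e // G.layer e = x} => G.src e) (fun e => G.tgt e))

theorem mk_src_eq_mk_tgt {e : G.E} (he : G.layer e = x) :
    Quotient.mk (G.layerSetoid x) (G.src e) = Quotient.mk _ (G.tgt e) :=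
  Quotient.sound (EqvGen.rel _ _ ⟨⟨e, he⟩, .inl ⟨rfl, rfl⟩⟩)

noncomputable def component (hθ : θ x = t) (ht : t ≠ .var x) (q : Quotient (G.layerSetoid x)) :
    PSG Sig ar S (sbind x t) where
  N := {n // Quotient.mk _ n = q}
  fintypeN := inferInstance
  nonemptyN := let ⟨n, hn⟩ := q.exists_rep; ⟨⟨n, hn⟩⟩
  E := {e // G.layer e = x ∧ Quotient.mk (G.layerSetoid x) (G.src e) = q}
  fintypeE := inferInstance
  layer _ := x
  src e := ⟨G.src e.1, e.2.2⟩
  tgt e := ⟨G.tgt e.1, (G.mk_src_eq_mk_tgt e.2.1).symm.trans e.2.2⟩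
  label n := G.label n.1
  label_mem n := G.label_mem n.1
  layer_mem _ := by rw [domS_sbind ht]; rfl
  out_deg n y hy := by
    obtain rfl : x = y := (by simpa [domS_sbind ht] using hy : y = x).symm
    rw [← G.out_deg n.1 x (show θ x ≠ .var x from hθ ▸ ht)]
    exact Nat.card_subtype_subtype (fun e => by simp [e.2.1, Subtype.ext_iff])
      (fun e he => ⟨he.1, by rw [he.2]; exact n.2⟩)
  in_deg n y hy := by
    obtain rfl : x = y := (by simpa [domS_sbind ht] using hy : y = x).symm
    rw [sbind, if_pos rfl, ← hθ, ← G.in_deg n.1 x (show θ x ≠ .var x from hθ ▸ ht)]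
    exact Nat.card_subtype_subtype (fun e => by simp [e.2.1, Subtype.ext_iff])
      (fun e he => ⟨he.1, by rw [G.mk_src_eq_mk_tgt he.1, he.2]; exact n.2⟩)
  conn a b := by
    have hab : ReflTransGen (EdgeAdj (fun e : {e // G.layer e = x} => G.src e)
        (fun e => G.tgt e)) a.1 b.1 := by
      rw [← EqvGen.eqvGen_eq_reflTransGen]; exact Quotient.exact (a.2.trans b.2.symm)
    refine hab.restrict (fun c d hc ⟨e, he⟩ => ?_) a.2 b.2
    have hd : Quotient.mk (G.layerSetoid x) d = q :=
      (Quotient.sound (EqvGen.rel c d ⟨e, he⟩)).symm.trans hc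
    have hsrc : Quotient.mk (G.layerSetoid x) (G.src e) = q := by
      rcases he with ⟨h, -⟩ | ⟨h, -⟩ <;> simp only at h <;> rwa [h]
    exact ⟨hd, ⟨e.1, e.2, hsrc⟩, he.imp (fun h => ⟨Subtype.ext h.1, Subtype.ext h.2⟩)
      (fun h => ⟨Subtype.ext h.1, Subtype.ext h.2⟩)⟩

theorem card_quotient_fiber (f : G.E → G.N) (T : ℕ → FTerm Sig ar) {y : ℕ} (hy : y ≠ x)
    (hf : ∀ n, Nat.card {e // G.layer e = y ∧ f e = n} = chi (G.label n) (T y))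
    (q : Quotient (G.layerSetoid x)) :
    Nat.card {e : {e // G.layer e ≠ x} // G.layer e.1 = y ∧ Quotient.mk _ (f e.1) = q} =
      chi (∑ n : {n // Quotient.mk _ n = q}, G.label n) (T y) := by
  rw [Nat.card_subtype_subtype (r := fun e => G.layer e = y ∧ Quotient.mk _ (f e) = q)
      (fun _ => Iff.rfl) (fun e he => he.1 ▸ hy),
    Nat.card_subtype_comp_eq_sum, chi_sum]
  exact Finset.sum_congr rfl fun n _ => hf n

end Decompose

noncomputable def quotient (G : PSG Sig ar S (Function.update σ x t)) (hσ : σ x = .var x)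
    (ht : t ≠ .var x) : PSG Sig ar (mguP S (sbind x t)) σ where
  N := Quotient (G.layerSetoid x)
  fintypeN := inferInstance
  nonemptyN := ⟨Quotient.mk _ (Classical.arbitrary _)⟩
  E := {e // G.layer e ≠ x}
  fintypeE := inferInstance
  layer e := G.layer e.1
  src e := Quotient.mk _ (G.src e.1)
  tgt e := Quotient.mk _ (G.tgt e.1)
  label q := ∑ n : {n // Quotient.mk _ n = q}, G.label n
  label_mem q := ⟨G.component (Function.update_self x t σ) ht q, rfl⟩
  layer_mem e := by
    have := G.layer_mem e.1
    rw [domS_update hσ ht] at this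
    exact this.resolve_left e.2
  out_deg q y hy := G.card_quotient_fiber G.src .var (ne_of_mem_domS hσ hy)
    (fun n => G.out_deg n y (mem_domS_update hσ ht hy)) q
  in_deg q y hy := by
    rw [← Function.update_of_ne (ne_of_mem_domS hσ hy) t σ]
    exact G.card_quotient_fiber G.tgt _ (ne_of_mem_domS hσ hy)
      (fun n => G.in_deg n y (mem_domS_update hσ ht hy)) q
  conn a b := by
    obtain ⟨a, rfl⟩ := a.exists_rep
    obtain ⟨b, rfl⟩ := b.exists_rep
    refine ReflTransGen.lift' (Quotient.mk _) ?_ a b (G.conn a b)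
    rintro a b ⟨e, he⟩
    change ReflTransGen _ (Quotient.mk _ a) (Quotient.mk _ b)
    by_cases hex : G.layer e = x
    · rcases he with ⟨rfl, rfl⟩ | ⟨rfl, rfl⟩ <;> rw [G.mk_src_eq_mk_tgt hex]
    · exact .single ⟨⟨e, hex⟩, he.imp (And.imp (congrArg _) (congrArg _))
        (And.imp (congrArg _) (congrArg _))⟩

theorem res_quotient (G : PSG Sig ar S (Function.update σ x t)) (hσ : σ x = .var x)
    (ht : t ≠ .var x) : (G.quotient hσ ht).res = G.res := by
  rw [PSG.res, PSG.res, ← Fintype.sum_fiberwise (Quotient.mk (G.layerSetoid x)) G.label]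
  rfl

section Glue

variable (G₂ : PSG Sig ar (mguP S (sbind x t)) σ) {H : G₂.N → PSG Sig ar S (sbind x t)}

/-- `g` reattaches every edge of `G₂` to a node of `H` lying over its `f`-endpoint, so that in
layer `y` each node `u` gets as many edges as `χ(label u, T y)` prescribes (`T` is `var` for
sources and `σ` for targets). -/
structure IsEndpointLift (f : G₂.E → G₂.N) (T : ℕ → FTerm Sig ar)
    (g : G₂.E → Σ n, (H n).N) : Prop where
  fst_eq : ∀ e, (g e).1 = f e
  card_eq : ∀ y ∈ domS σ, ∀ w,
    Nat.card {e // G₂.layer e = y ∧ g e = w} = chi ((H w.1).label w.2) (T y)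

theorem exists_isEndpointLift (hH : ∀ n, (H n).res = G₂.label n) (f : G₂.E → G₂.N)
    (T : ℕ → FTerm Sig ar)
    (hf : ∀ n, ∀ y ∈ domS σ, Nat.card {e // G₂.layer e = y ∧ f e = n} = chi (G₂.label n) (T y)) :
    ∃ g, G₂.IsEndpointLift (H := H) f T g := by
  have hlayer (y : domS σ) (P : G₂.E → Prop) :
      Nat.card {e // (⟨G₂.layer e, G₂.layer_mem e⟩ : domS σ) = y ∧ P e} =
        Nat.card {e // G₂.layer e = y ∧ P e} :=
    Nat.card_congr (Equiv.subtypeEquivRight fun e => by rw [Subtype.ext_iff])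
  obtain ⟨g, hgf, hg⟩ := exists_sigma_lift_of_card_fiber
    (fun e => (⟨G₂.layer e, G₂.layer_mem e⟩ : domS σ)) f
    (fun y (w : Σ n, (H n).N) => chi ((H w.1).label w.2) (T y)) fun ⟨y, hy⟩ n => by
      rw [hlayer, hf n y hy, ← hH n, PSG.res, chi_sum]
  exact ⟨g, hgf, fun y hy w => by rw [← hlayer ⟨y, hy⟩, hg]⟩

theorem card_glue (hσ : σ x = .var x) (ht : t ≠ .var x) (s : ∀ n, (H n).E → (H n).N)
    (g : G₂.E → Σ n, (H n).N) (T : ℕ → FTerm Sig ar)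
    (hs : ∀ n u, Nat.card {e // (H n).layer e = x ∧ s n e = u} = chi ((H n).label u) (T x))
    (hg : ∀ y ∈ domS σ, ∀ w,
      Nat.card {e // G₂.layer e = y ∧ g e = w} = chi ((H w.1).label w.2) (T y))
    {y : ℕ} (hy : y ∈ domS (Function.update σ x t)) (w : Σ n, (H n).N) :
    Nat.card {e : (Σ n, (H n).E) ⊕ G₂.E //
      Sum.elim (fun _ => x) G₂.layer e = y ∧ Sum.elim (Sigma.map id s) g e = w} =
        chi ((H w.1).label w.2) (T y) := by
  rw [Nat.card_subtype_sum]
  simp only [Sum.elim_inl, Sum.elim_inr]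
  rw [domS_update hσ ht] at hy
  rcases hy with rfl | hy
  · have : IsEmpty {e // G₂.layer e = y ∧ g e = w} :=
      ⟨fun e => ne_of_mem_domS hσ (e.2.1 ▸ G₂.layer_mem e.1) rfl⟩
    have hlayer n (e : (H n).E) : (H n).layer e = y := by
      simpa [domS_sbind ht] using (H n).layer_mem e
    simp only [true_and, Nat.card_of_isEmpty, add_zero]
    rw [Nat.card_subtype_sigmaMap_eq, ← hs]
    simp [hlayer]
  · rw [hg y hy w]
    simp [(ne_of_mem_domS hσ hy).symm]

noncomputable def glue (hσ : σ x = .var x) (ht : t ≠ .var x) (gs gt : G₂.E → Σ n, (H n).N)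
    (hgs : G₂.IsEndpointLift G₂.src .var gs) (hgt : G₂.IsEndpointLift G₂.tgt σ gt) :
    PSG Sig ar S (Function.update σ x t) where
  N := Σ n, (H n).N
  fintypeN := inferInstance
  nonemptyN := ⟨⟨Classical.arbitrary _, Classical.arbitrary _⟩⟩
  E := (Σ n, (H n).E) ⊕ G₂.E
  fintypeE := inferInstance
  layer := Sum.elim (fun _ => x) G₂.layer
  src := Sum.elim (Sigma.map id fun n => (H n).src) gs
  tgt := Sum.elim (Sigma.map id fun n => (H n).tgt) gt
  label w := (H w.1).label w.2
  label_mem w := (H w.1).label_mem w.2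
  layer_mem := by
    rintro (_ | e)
    · rw [domS_update hσ ht]; exact Set.mem_insert x _
    · exact mem_domS_update hσ ht (G₂.layer_mem e)
  out_deg w y hy := G₂.card_glue hσ ht _ gs .var
    (fun n u => (H n).out_deg u x (by simp [domS_sbind ht])) hgs.card_eq hy w
  in_deg w y hy := G₂.card_glue hσ ht _ gt (Function.update σ x t)
    (fun n u => by
      rw [(H n).in_deg u x (by simp [domS_sbind ht]), Function.update_self, sbind, if_pos rfl])
    (fun y hy w => by
      rw [Function.update_of_ne (ne_of_mem_domS hσ hy)]; exact hgt.card_eq y hy w) hy w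
  conn a b := by
    refine ReflTransGen.of_fibers (π := Sigma.fst) ?_ ?_ (G₂.conn a.1 b.1)
    · rintro ⟨n, u⟩ ⟨m, v⟩ (rfl : n = m)
      refine ReflTransGen.lift (β := Σ n, (H n).N) (Sigma.mk n) ?_ u v ((H n).conn u v)
      rintro u v ⟨e, he⟩
      exact ⟨.inl ⟨n, e⟩, he.imp (And.imp (congrArg _) (congrArg _))
        (And.imp (congrArg _) (congrArg _))⟩
    · rintro n m ⟨e, ⟨rfl, rfl⟩ | ⟨rfl, rfl⟩⟩
      · exact ⟨gs e, gt e, hgs.fst_eq e, hgt.fst_eq e, .inr e, .inl ⟨rfl, rfl⟩⟩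
      · exact ⟨gt e, gs e, hgt.fst_eq e, hgs.fst_eq e, .inr e, .inr ⟨rfl, rfl⟩⟩

theorem res_glue (hH : ∀ n, (H n).res = G₂.label n) (hσ : σ x = .var x) (ht : t ≠ .var x)
    (gs gt : G₂.E → Σ n, (H n).N) (hgs : G₂.IsEndpointLift G₂.src .var gs)
    (hgt : G₂.IsEndpointLift G₂.tgt σ gt) : (G₂.glue hσ ht gs gt hgs hgt).res = G₂.res :=
  (Fintype.sum_sigma _).trans (Finset.sum_congr rfl fun n _ => hH n)

end Glue

end PSG

theorem mguP_update {S : Set (ℕ →₀ ℕ)} {σ : ℕ → FTerm Sig ar} {x : ℕ} {t : FTerm Sig ar}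
    (hσ : σ x = .var x) : mguP S (Function.update σ x t) = mguP (mguP S (sbind x t)) σ := by
  by_cases ht : t = .var x
  · subst ht
    rw [Function.update_eq_self_iff.mpr hσ.symm, mguP_of_domS_eq_empty (θ := sbind x _)
      (by rw [sbind_eq_update, Function.update_eq_self, domS_var])]
  refine subset_antisymm ?_ ?_
  · rintro _ ⟨G, rfl⟩
    exact ⟨G.quotient hσ ht, G.res_quotient hσ ht⟩
  · rintro _ ⟨G₂, rfl⟩
    choose H hH using fun n => G₂.label_mem n
    obtain ⟨gs, hgs⟩ := G₂.exists_isEndpointLift hH G₂.src .var G₂.out_deg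
    obtain ⟨gt, hgt⟩ := G₂.exists_isEndpointLift hH G₂.tgt σ G₂.in_deg
    exact ⟨G₂.glue hσ ht gs gt hgs hgt, G₂.res_glue hH hσ ht gs gt hgs hgt⟩

theorem mguSeq_eq_mguP_general (Sig : Type) (ar : Sig → ℕ)
    (S : Set (ℕ →₀ ℕ)) (l : List (ℕ × FTerm Sig ar))
    (hnodup : (l.map Prod.fst).Nodup) :
    mguSeq S l = mguP S (toSubst l) := by
  induction l generalizing S with
  | nil => exact (mguP_of_domS_eq_empty domS_var).symm
  | cons p l ih =>
    obtain ⟨x, t⟩ := p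
    rw [List.map_cons, List.nodup_cons] at hnodup
    rw [mguSeq, ih _ hnodup.2, toSubst_cons, mguP_update (toSubst_apply_of_not_mem hnodup.1)]

/-- Theorem 1 of the paper: for every set `S` of ω-sharing
groups and every idempotent substitution `θ` (presented as its list of bindings
`{x₁/t₁, …, x_p/t_p}`), sequential and parallel abstract unification coincide:
`mgu_ω(S,θ) = mgu_p(S,θ)`. -/
theorem mguSeq_eq_mguP (Sig : Type) (ar : Sig → ℕ)
    (S : Set (ℕ →₀ ℕ)) (l : List (ℕ × FTerm Sig ar))
    (hnodup : (l.map Prod.fst).Nodup)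
    (hbind : ∀ p ∈ l, p.2 ≠ FTerm.var p.1)
    (hidem : Idem (toSubst l)) :
    mguSeq S l = mguP S (toSubst l) :=
  mguSeq_eq_mguP_general Sig ar S l hnodup
end

section
/- Optimality of parallel abstract unification when the binding variables are variables of interest: let U be a finite set of variables, let S be a set of ω-sharing groups whose supports are contained in U and which contains the empty multiset, and let θ be an idempotent substitution with vars(θ) ⊆ U. Then for every B ∈ mgu_p(S,θ) there exist an idempotent substitution δ with vars(δ) ∩ vars(θ) ⊆ U and rng(δ) ∩ U = ∅, satisfying δ⁻¹(v)|_U ∈ S for every variable v ∈ 𝒱, an idempotent most general unifier η of the set of equations Eq(δ) ∪ Eq(θ), and a variable w ∈ 𝒱, such that η⁻¹(w)|_U = B. -/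
open Classical

variable {Sig : Type} {ar : Sig → ℕ}

/-- `θ⁻¹(v)`: the ω-sharing group mapping each variable `w` to the number of
occurrences of `v` in `θ(w)` (as a plain function). -/
def invSub (θ : ℕ → FTerm Sig ar) (v : ℕ) : ℕ → ℕ := fun w => FTerm.occ v (θ w)

/-- Restriction `M|_U` of a multiset of variables to a finite set `U`. -/
noncomputable def restr (U : Finset ℕ) (f : ℕ → ℕ) : ℕ →₀ ℕ :=
  Finsupp.onFinset U (fun v => if v ∈ U then f v else 0)
    (fun v h => by by_contra hc; simp [hc] at h)

/-- The set of equations `Eq(θ) = { x = θ(x) : x ∈ dom(θ) }`. -/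
def EqSet (θ : ℕ → FTerm Sig ar) : Set (FTerm Sig ar × FTerm Sig ar) :=
  { p | ∃ x ∈ domS θ, p = (FTerm.var x, θ x) }

/-- `η` is a unifier of the set of equations `E`. -/
def Unifies (η : ℕ → FTerm Sig ar) (E : Set (FTerm Sig ar × FTerm Sig ar)) : Prop :=
  ∀ p ∈ E, FTerm.subst η p.1 = FTerm.subst η p.2

/-- `η` is a most general unifier of the set of equations `E`: it is a unifier
and every unifier factors through it. -/
def IsMGU (η : ℕ → FTerm Sig ar) (E : Set (FTerm Sig ar × FTerm Sig ar)) : Prop :=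
  Unifies η E ∧ ∀ τ : ℕ → FTerm Sig ar, Unifies τ E →
    ∃ τ' : ℕ → FTerm Sig ar, ∀ x, τ x = FTerm.subst τ' (η x)

/-!
Name each node `n` of a parallel sharing graph `G` by a fresh variable `z n`. The substitution
`δ` sends `y ∈ U \ dom θ` to `f(z n₁, …, z nₖ)`, where each node `n` occurs `l(n)(y)` times among
the `nᵢ`, and `x ∈ dom θ` to `θ x` with each occurrence of a variable `y` replaced by a term
`f(z m₁, …, z mₖ)` in which `mᵢ → nᵢ` is an edge of layer `x`. The in-degree condition lets
these slots run exactly once over the edges of layer `x`, and the out-degree condition then gives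
`δ⁻¹(z n)|_U = l(n)`. Any unifier of `Eq(δ) ∪ Eq(θ)` equates the two ends of every edge, hence,
`G` being connected, all the `z n`; so `η`, which is `δ` followed by collapsing every `z n` to
one variable `w`, is a most general unifier, and `η⁻¹(w)|_U = ∑ₙ l(n) = res G`.
-/

namespace FTerm

def VarPos : FTerm Sig ar → Type
  | var _ => Unit
  | app f ts => Σ i : Fin (ar f), VarPos (ts i)

instance instFintypeVarPos : (t : FTerm Sig ar) → Fintype t.VarPos
  | var _ => inferInstanceAs (Fintype Unit)
  | app _ ts =>
      letI := fun i => instFintypeVarPos (ts i)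
      inferInstanceAs (Fintype (Σ i, (ts i).VarPos))

def varAt : (t : FTerm Sig ar) → t.VarPos → ℕ
  | var v, _ => v
  | app _ ts, ⟨i, p⟩ => varAt (ts i) p

def fill : (t : FTerm Sig ar) → (t.VarPos → FTerm Sig ar) → FTerm Sig ar
  | var _, F => F ()
  | app f ts, F => app f fun i => fill (ts i) fun p => F ⟨i, p⟩

instance (v : ℕ) : Unique (var v : FTerm Sig ar).VarPos := inferInstanceAs (Unique Unit)

theorem subst_eq_fill (σ : ℕ → FTerm Sig ar) :
    ∀ t : FTerm Sig ar, t.subst σ = t.fill (σ ∘ t.varAt)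
  | var _ => rfl
  | app _ ts => congrArg _ (funext fun i => subst_eq_fill σ (ts i))

theorem subst_fill (σ : ℕ → FTerm Sig ar) :
    ∀ (t : FTerm Sig ar) (F : t.VarPos → FTerm Sig ar),
      (t.fill F).subst σ = t.fill fun p => (F p).subst σ
  | var _, _ => rfl
  | app _ ts, _ => congrArg _ (funext fun i => subst_fill σ (ts i) _)

theorem fill_injective : ∀ t : FTerm Sig ar, Function.Injective t.fill
  | var _, F, G, h => funext fun () => h
  | app _ ts, F, G, h => by
      simp only [fill, app.injEq, heq_eq_eq, true_and] at h
      funext ⟨i, p⟩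
      exact congrFun (fill_injective (ts i) (congrFun h i)) p

theorem fill_ne_var {y : ℕ} :
    ∀ (t : FTerm Sig ar) (F : t.VarPos → FTerm Sig ar), (∀ p, F p ≠ var y) → t.fill F ≠ var y
  | var _, _, hF => hF ()
  | app _ _, _, _ => fun h => by cases h

theorem occ_fill (x : ℕ) :
    ∀ (t : FTerm Sig ar) (F : t.VarPos → FTerm Sig ar), occ x (t.fill F) = ∑ p, occ x (F p)
  | var _, F => (Fintype.sum_unique fun p => occ x (F p)).symm
  | app _ ts, F => by
      rw [fill, occ]
      exact (Finset.sum_congr rfl fun i _ => occ_fill x (ts i) _).trans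
        (Fintype.sum_sigma (α := fun i => (ts i).VarPos) fun p => occ x (F p)).symm

theorem occ_subst (x : ℕ) (σ : ℕ → FTerm Sig ar) (t : FTerm Sig ar) :
    occ x (t.subst σ) = ∑ p, occ x (σ (t.varAt p)) := by
  rw [subst_eq_fill, occ_fill]
  rfl

theorem eq_of_occ_var_ne_zero {x y : ℕ} (h : occ y (var x : FTerm Sig ar) ≠ 0) : x = y :=
  by_contra fun hne => h (if_neg hne)

theorem subst_var_eq_self (t : FTerm Sig ar) : t.subst var = t := by
  induction t with
  | var _ => rfl
  | app _ _ ih => exact congrArg _ (funext ih)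

theorem occ_eq_sum (x : ℕ) (t : FTerm Sig ar) :
    occ x t = ∑ p, if t.varAt p = x then 1 else 0 := by
  conv_lhs => rw [← subst_var_eq_self t, occ_subst]
  rfl

theorem occ_varAt_ne_zero (t : FTerm Sig ar) (p : t.VarPos) : occ (t.varAt p) t ≠ 0 := by
  rw [occ_eq_sum]
  exact (Finset.sum_pos' (fun _ _ => Nat.zero_le _) ⟨p, Finset.mem_univ _, by simp⟩).ne'

theorem subst_subst (σ τ : ℕ → FTerm Sig ar) (t : FTerm Sig ar) :
    (t.subst σ).subst τ = t.subst fun v => (σ v).subst τ := by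
  induction t with
  | var _ => rfl
  | app _ _ ih => exact congrArg _ (funext ih)

theorem subst_congr {σ τ : ℕ → FTerm Sig ar} (t : FTerm Sig ar)
    (h : ∀ v, occ v t ≠ 0 → σ v = τ v) : t.subst σ = t.subst τ := by
  rw [subst_eq_fill, subst_eq_fill]
  exact congrArg _ (funext fun p => h _ (occ_varAt_ne_zero t p))

end FTerm

theorem chi_eq_sum (B : ℕ →₀ ℕ) (t : FTerm Sig ar) :
    chi B t = ∑ p, B (t.varAt p) := by
  simp only [chi, FTerm.occ_eq_sum, Finset.mul_sum, mul_ite, mul_one, mul_zero]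
  rw [Finset.sum_comm]
  refine Finset.sum_congr rfl fun p _ => ?_
  rw [Finset.sum_ite_eq]
  exact ite_eq_left_iff.mpr fun h => (Finsupp.notMem_support_iff.mp h).symm

theorem chi_var (B : ℕ →₀ ℕ) (x : ℕ) : chi B (FTerm.var x : FTerm Sig ar) = B x := by
  rw [chi_eq_sum, Fintype.sum_unique]
  rfl

namespace FTerm

section Signature

variable (hsig : ∀ k : ℕ, ∃ f : Sig, ar f = k)

noncomputable def mk (k : ℕ) (g : Fin k → FTerm Sig ar) : FTerm Sig ar :=
  app (hsig k).choose fun i => g (Fin.cast (hsig k).choose_spec i)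

theorem occ_mk (x k : ℕ) (g : Fin k → FTerm Sig ar) :
    occ x (mk hsig k g) = ∑ i, occ x (g i) :=
  Fintype.sum_equiv (finCongr (hsig k).choose_spec) _ _ fun _ => rfl

theorem mk_ne_var (k : ℕ) (g : Fin k → FTerm Sig ar) (y : ℕ) : mk hsig k g ≠ var y :=
  fun h => by cases h

theorem mk_injective (k : ℕ) : Function.Injective (mk hsig k : (Fin k → FTerm Sig ar) → _) := by
  intro g g' h
  simp only [mk, app.injEq, heq_eq_eq, true_and] at h
  funext i
  simpa using congrFun h (Fin.cast (hsig k).choose_spec.symm i)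

end Signature

end FTerm

theorem mem_rngS_of_occ {θ : ℕ → FTerm Sig ar} {x y : ℕ} (hx : x ∈ domS θ)
    (hy : FTerm.occ y (θ x) ≠ 0) : y ∈ rngS θ :=
  Set.mem_biUnion hx hy

theorem notMem_domS_of_mem_rngS {θ : ℕ → FTerm Sig ar} (hθ : Idem θ) {y : ℕ} (hy : y ∈ rngS θ) :
    y ∉ domS θ :=
  fun hd => Set.eq_empty_iff_forall_notMem.mp hθ y ⟨hd, hy⟩

theorem unifies_union {τ : ℕ → FTerm Sig ar} {E F : Set (FTerm Sig ar × FTerm Sig ar)} :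
    Unifies τ (E ∪ F) ↔ Unifies τ E ∧ Unifies τ F :=
  ⟨fun h => ⟨fun p hp => h p (Or.inl hp), fun p hp => h p (Or.inr hp)⟩,
    fun h p hp => hp.elim (h.1 p) (h.2 p)⟩

theorem unifies_eqSet_iff {τ σ : ℕ → FTerm Sig ar} :
    Unifies τ (EqSet σ) ↔ ∀ x, τ x = (σ x).subst τ := by
  refine ⟨fun h x => ?_, fun h => ?_⟩
  · by_cases hx : x ∈ domS σ
    · exact h _ ⟨x, hx, rfl⟩
    · rw [show σ x = FTerm.var x from not_not.mp hx]
      rfl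
  · rintro _ ⟨x, -, rfl⟩
    exact h x

theorem restr_eq_of_support_subset {U : Finset ℕ} {f : ℕ → ℕ} {B : ℕ →₀ ℕ}
    (hB : ∀ v ∈ B.support, v ∈ U) (h : ∀ v ∈ U, f v = B v) : restr U f = B := by
  ext v
  rw [restr, Finsupp.onFinset_apply]
  split_ifs with hv
  · exact h v hv
  · exact (Finsupp.notMem_support_iff.mp fun h' => hv (hB v h')).symm

theorem card_fiber_sigma_fst {α ι : Type*} [Fintype α] [Fintype ι] [DecidableEq ι] {c : ι → ℕ}
    (e : α ≃ Σ i, Fin (c i)) (m : ι) : ∑ a, (if (e a).1 = m then 1 else 0) = c m := by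
  rw [e.sum_comp (fun s => if s.1 = m then 1 else 0), Fintype.sum_sigma]
  simp [apply_ite Finset.card]

namespace PSG

variable {S : Set (ℕ →₀ ℕ)} {θ : ℕ → FTerm Sig ar} (G : PSG Sig ar S θ)

theorem res_apply (v : ℕ) : G.res v = ∑ n, G.label n v :=
  Finsupp.finsetSum_apply _ _ _

theorem card_layer_src {u : ℕ} (hu : u ∈ domS θ) (n : G.N) :
    Fintype.card {e : {e // G.layer e = u} // G.src e.1 = n} = G.label n u := by
  rw [Fintype.card_congr (Equiv.subtypeSubtypeEquivSubtypeInter (G.layer · = u) (G.src · = n)),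
    ← Nat.card_eq_fintype_card, G.out_deg n u hu, chi_var]

theorem card_layer_tgt {u : ℕ} (hu : u ∈ domS θ) (m : G.N) :
    Fintype.card {e : {e // G.layer e = u} // G.tgt e.1 = m} = chi (G.label m) (θ u) := by
  rw [Fintype.card_congr (Equiv.subtypeSubtypeEquivSubtypeInter (G.layer · = u) (G.tgt · = m)),
    ← Nat.card_eq_fintype_card, G.in_deg m u hu]

noncomputable def nodeList (v : ℕ) (i : Fin (G.res v)) : G.N :=
  ((Fintype.equivFinOfCardEq (by simp [res_apply]) : (Σ n, Fin (G.label n v)) ≃ _).symm i).1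

theorem sum_nodeList_eq (v : ℕ) (m : G.N) :
    ∑ i, (if G.nodeList v i = m then 1 else 0) = G.label m v :=
  card_fiber_sigma_fst _ m

abbrev Slot (t : FTerm Sig ar) : Type := Σ p : t.VarPos, Fin (G.res (t.varAt p))

noncomputable def slotNode (t : FTerm Sig ar) (s : G.Slot t) : G.N := G.nodeList (t.varAt s.1) s.2

theorem card_slotNode_fiber (t : FTerm Sig ar) (m : G.N) :
    Fintype.card {s // G.slotNode t s = m} = chi (G.label m) t := by
  rw [Fintype.card_subtype, Finset.card_filter, chi_eq_sum]
  exact (Fintype.sum_sigma (α := fun p : t.VarPos => Fin (G.res (t.varAt p))) _).trans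
    (Finset.sum_congr rfl fun p _ => G.sum_nodeList_eq _ m)

noncomputable def slotEdge {u : ℕ} (hu : u ∈ domS θ) : G.Slot (θ u) ≃ {e // G.layer e = u} :=
  Equiv.ofFiberEquiv (f := G.slotNode (θ u)) (g := fun e => G.tgt e.1) fun m =>
    Fintype.equivOfCardEq (by rw [card_slotNode_fiber, card_layer_tgt G hu])

theorem tgt_slotEdge {u : ℕ} (hu : u ∈ domS θ) (s : G.Slot (θ u)) :
    G.tgt (G.slotEdge hu s).1 = G.slotNode (θ u) s :=
  Equiv.ofFiberEquiv_map (f := G.slotNode (θ u))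
    (g := fun e : {e // G.layer e = u} => G.tgt e.1) _ s

variable (hsig : ∀ k : ℕ, ∃ f : Sig, ar f = k) (U : Finset ℕ)

noncomputable def fresh (n : G.N) : ℕ := U.sup id + 1 + Fintype.equivFin G.N n

theorem fresh_injective : Function.Injective (G.fresh U) := fun a b h =>
  (Fintype.equivFin G.N).injective (Fin.ext (by simp only [fresh] at h; omega))

theorem fresh_notMem (n : G.N) : G.fresh U n ∉ U := fun h => by
  have := Finset.le_sup (f := id) h
  simp only [fresh, id] at this
  omega

noncomputable def freshTerm (k : ℕ) (g : Fin k → G.N) : FTerm Sig ar :=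
  FTerm.mk hsig k fun i => FTerm.var (G.fresh U (g i))

theorem freshTerm_subst (σ : ℕ → FTerm Sig ar) (k : ℕ) (g : Fin k → G.N) :
    (G.freshTerm hsig U k g).subst σ = FTerm.mk hsig k fun i => σ (G.fresh U (g i)) := rfl

theorem occ_fresh_freshTerm (n : G.N) (k : ℕ) (g : Fin k → G.N) :
    FTerm.occ (G.fresh U n) (G.freshTerm hsig U k g) = ∑ i, if g i = n then 1 else 0 := by
  simp only [freshTerm, FTerm.occ_mk, FTerm.occ, (G.fresh_injective U).eq_iff]

theorem occ_freshTerm_eq_zero {x : ℕ} (hx : x ∉ Set.range (G.fresh U)) (k : ℕ)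
    (g : Fin k → G.N) : FTerm.occ x (G.freshTerm hsig U k g) = 0 := by
  simp only [freshTerm, FTerm.occ_mk, FTerm.occ]
  exact Finset.sum_eq_zero fun i _ => if_neg fun h => hx ⟨_, h⟩

noncomputable def delta (v : ℕ) : FTerm Sig ar :=
  if hv : v ∈ domS θ then
    (θ v).fill fun p => G.freshTerm hsig U _ fun i => G.src (G.slotEdge hv ⟨p, i⟩).1
  else if v ∈ U then G.freshTerm hsig U _ (G.nodeList v)
  else FTerm.var v

theorem delta_of_mem_domS {v : ℕ} (hv : v ∈ domS θ) :
    G.delta hsig U v =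
      (θ v).fill fun p => G.freshTerm hsig U _ fun i => G.src (G.slotEdge hv ⟨p, i⟩).1 :=
  dif_pos hv

theorem delta_of_notMem_domS {v : ℕ} (hv : v ∉ domS θ) (hvU : v ∈ U) :
    G.delta hsig U v = G.freshTerm hsig U _ (G.nodeList v) := by
  rw [delta, dif_neg hv, if_pos hvU]

theorem delta_of_notMem (hdom : domS θ ⊆ U) {v : ℕ} (hv : v ∉ U) :
    G.delta hsig U v = FTerm.var v := by
  rw [delta, dif_neg fun h => hv (hdom h), if_neg hv]

theorem occ_fresh_delta {v : ℕ} (hv : v ∈ U) (n : G.N) :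
    FTerm.occ (G.fresh U n) (G.delta hsig U v) = G.label n v := by
  by_cases hd : v ∈ domS θ
  · rw [G.delta_of_mem_domS hsig U hd, FTerm.occ_fill]
    simp only [occ_fresh_freshTerm]
    calc ∑ p, ∑ i, (if G.src (G.slotEdge hd ⟨p, i⟩).1 = n then 1 else 0)
        = ∑ s, if G.src (G.slotEdge hd s).1 = n then 1 else 0 :=
          (Fintype.sum_sigma fun s : G.Slot (θ v) =>
            if G.src (G.slotEdge hd s).1 = n then 1 else 0).symm
      _ = ∑ e : {e // G.layer e = v}, if G.src e.1 = n then 1 else 0 :=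
          (G.slotEdge hd).sum_comp fun e => if G.src e.1 = n then 1 else 0
      _ = G.label n v := by
          rw [← Finset.card_filter, ← Fintype.card_subtype, G.card_layer_src hd]
  · rw [G.delta_of_notMem_domS hsig U hd hv, occ_fresh_freshTerm, sum_nodeList_eq]

theorem occ_delta_eq_zero {v : ℕ} (hv : v ∈ U) {x : ℕ} (hx : x ∉ Set.range (G.fresh U)) :
    FTerm.occ x (G.delta hsig U v) = 0 := by
  by_cases hd : v ∈ domS θ
  · rw [G.delta_of_mem_domS hsig U hd, FTerm.occ_fill]
    exact Finset.sum_eq_zero fun p _ => G.occ_freshTerm_eq_zero hsig U hx _ _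
  · rw [G.delta_of_notMem_domS hsig U hd hv]
    exact G.occ_freshTerm_eq_zero hsig U hx _ _

theorem domS_delta (hdom : domS θ ⊆ U) : domS (G.delta hsig U) = U := by
  ext v
  refine ⟨fun hv => by_contra fun h => hv (G.delta_of_notMem hsig U hdom h), fun hv => ?_⟩
  by_cases hd : v ∈ domS θ
  · show _ ≠ _
    rw [G.delta_of_mem_domS hsig U hd]
    exact FTerm.fill_ne_var _ _ fun _ => FTerm.mk_ne_var hsig _ _ _
  · show _ ≠ _
    rw [G.delta_of_notMem_domS hsig U hd hv]
    exact FTerm.mk_ne_var hsig _ _ _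

theorem rngS_delta_inter (hdom : domS θ ⊆ U) : rngS (G.delta hsig U) ∩ U = ∅ := by
  refine Set.eq_empty_iff_forall_notMem.mpr fun x ⟨hx, hxU⟩ => ?_
  simp only [rngS, G.domS_delta hsig U hdom, Set.mem_iUnion] at hx
  obtain ⟨v, hv, hx⟩ := hx
  obtain ⟨n, rfl⟩ : x ∈ Set.range (G.fresh U) :=
    by_contra fun h => hx (G.occ_delta_eq_zero hsig U hv h)
  exact G.fresh_notMem U n hxU

theorem idem_delta (hdom : domS θ ⊆ U) : Idem (G.delta hsig U) := by
  rw [Idem, G.domS_delta hsig U hdom, Set.inter_comm, G.rngS_delta_inter hsig U hdom]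

theorem restr_invSub_delta_mem (hS0 : (0 : ℕ →₀ ℕ) ∈ S)
    (hSU : ∀ B ∈ S, ∀ v ∈ (B : ℕ →₀ ℕ).support, v ∈ U) (x : ℕ) :
    restr U (invSub (G.delta hsig U) x) ∈ S := by
  by_cases hx : x ∈ Set.range (G.fresh U)
  · obtain ⟨n, rfl⟩ := hx
    rw [restr_eq_of_support_subset (f := invSub _ _) (hSU _ (G.label_mem n)) fun v hv =>
      G.occ_fresh_delta hsig U hv n]
    exact G.label_mem n
  · rwa [restr_eq_of_support_subset (f := invSub _ _) (B := 0) (by simp) fun v hv =>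
      G.occ_delta_eq_zero hsig U hv hx]

noncomputable def hub : ℕ := G.fresh U (Classical.arbitrary G.N)

noncomputable def collapse (y : ℕ) : FTerm Sig ar :=
  if y ∈ Set.range (G.fresh U) then FTerm.var (G.hub U) else FTerm.var y

noncomputable def eta (x : ℕ) : FTerm Sig ar := (G.delta hsig U x).subst (G.collapse U)

noncomputable def hubTerm (k : ℕ) : FTerm Sig ar := FTerm.mk hsig k fun _ => FTerm.var (G.hub U)

theorem collapse_fresh (n : G.N) : G.collapse U (G.fresh U n) = FTerm.var (G.hub U) :=
  if_pos ⟨n, rfl⟩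

theorem collapse_of_notMem_range {y : ℕ} (hy : y ∉ Set.range (G.fresh U)) :
    G.collapse U y = FTerm.var y :=
  if_neg hy

theorem hub_notMem : G.hub U ∉ U := G.fresh_notMem U _

theorem freshTerm_subst_collapse (k : ℕ) (g : Fin k → G.N) :
    (G.freshTerm hsig U k g).subst (G.collapse U) = G.hubTerm hsig U k := by
  simp only [freshTerm_subst, collapse_fresh, hubTerm]

theorem eta_of_notMem (hdom : domS θ ⊆ U) {x : ℕ} (hx : x ∉ U) :
    G.eta hsig U x = G.collapse U x := by
  rw [eta, G.delta_of_notMem hsig U hdom hx]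
  rfl

theorem eta_of_mem_domS {x : ℕ} (hx : x ∈ domS θ) :
    G.eta hsig U x = (θ x).subst fun y => G.hubTerm hsig U (G.res y) := by
  rw [eta, G.delta_of_mem_domS hsig U hx, FTerm.subst_fill, FTerm.subst_eq_fill]
  simp only [freshTerm_subst_collapse]
  rfl

theorem eta_of_notMem_domS {x : ℕ} (hx : x ∉ domS θ) (hxU : x ∈ U) :
    G.eta hsig U x = G.hubTerm hsig U (G.res x) := by
  rw [eta, G.delta_of_notMem_domS hsig U hx hxU, freshTerm_subst_collapse]

theorem occ_hub_subst_collapse (t : FTerm Sig ar) :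
    FTerm.occ (G.hub U) (t.subst (G.collapse U)) = ∑ n, FTerm.occ (G.fresh U n) t := by
  simp only [FTerm.occ_subst, FTerm.occ_eq_sum (G.fresh U _) t]
  rw [Finset.sum_comm]
  refine Finset.sum_congr rfl fun p _ => ?_
  by_cases h : t.varAt p ∈ Set.range (G.fresh U)
  · obtain ⟨m, hm⟩ := h
    simp [← hm, collapse_fresh, FTerm.occ, (G.fresh_injective U).eq_iff]
  · rw [G.collapse_of_notMem_range U h, FTerm.occ, if_neg fun h' => h ⟨_, h'.symm⟩]
    exact (Finset.sum_eq_zero fun n _ => if_neg fun h' => h ⟨n, h'.symm⟩).symm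

theorem occ_hub_eta {v : ℕ} (hv : v ∈ U) : FTerm.occ (G.hub U) (G.eta hsig U v) = G.res v := by
  rw [eta, occ_hub_subst_collapse, res_apply]
  exact Finset.sum_congr rfl fun n _ => G.occ_fresh_delta hsig U hv n

theorem res_support_subset (hSU : ∀ B ∈ S, ∀ v ∈ (B : ℕ →₀ ℕ).support, v ∈ U) :
    ∀ v ∈ G.res.support, v ∈ U := by
  intro v hv
  by_contra hvU
  refine Finsupp.mem_support_iff.mp hv ((G.res_apply v).trans (Finset.sum_eq_zero fun n _ => ?_))
  exact Finsupp.notMem_support_iff.mp fun h => hvU (hSU _ (G.label_mem n) v h)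

theorem eq_hub_of_occ_eta (hdom : domS θ ⊆ U) {x y : ℕ} (hx : x ∈ domS (G.eta hsig U))
    (hy : FTerm.occ y (G.eta hsig U x) ≠ 0) : y = G.hub U := by
  by_cases hxU : x ∈ U
  · rw [eta, FTerm.occ_subst] at hy
    obtain ⟨p, -, hp⟩ := Finset.exists_ne_zero_of_sum_ne_zero hy
    obtain ⟨n, hn⟩ : (G.delta hsig U x).varAt p ∈ Set.range (G.fresh U) := by_contra fun h =>
      FTerm.occ_varAt_ne_zero _ p (G.occ_delta_eq_zero hsig U hxU h)
    rw [← hn, collapse_fresh] at hp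
    exact (FTerm.eq_of_occ_var_ne_zero hp).symm
  · rw [G.eta_of_notMem hsig U hdom hxU] at hy
    by_cases hxr : x ∈ Set.range (G.fresh U)
    · obtain ⟨n, rfl⟩ := hxr
      rw [collapse_fresh] at hy
      exact (FTerm.eq_of_occ_var_ne_zero hy).symm
    · exact absurd ((G.eta_of_notMem hsig U hdom hxU).trans (G.collapse_of_notMem_range U hxr)) hx

theorem idem_eta (hdom : domS θ ⊆ U) : Idem (G.eta hsig U) := by
  refine Set.eq_empty_iff_forall_notMem.mpr fun v ⟨hd, hr⟩ => ?_
  simp only [rngS, Set.mem_iUnion] at hr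
  obtain ⟨x, hx, hv⟩ := hr
  rw [G.eq_hub_of_occ_eta hsig U hdom hx hv] at hd
  exact hd (by rw [G.eta_of_notMem hsig U hdom (G.hub_notMem U)]; exact G.collapse_fresh U _)

theorem domS_eta_finite (hdom : domS θ ⊆ U) : (domS (G.eta hsig U)).Finite := by
  refine (U.finite_toSet.union (Set.finite_range (G.fresh U))).subset fun x hx => ?_
  by_contra h
  simp only [Set.mem_union, not_or] at h
  exact hx ((G.eta_of_notMem hsig U hdom h.1).trans (G.collapse_of_notMem_range U h.2))

theorem unifies_eta (hdom : domS θ ⊆ U) (hrng : rngS θ ⊆ U) (hidem : Idem θ) :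
    Unifies (G.eta hsig U) (EqSet (G.delta hsig U) ∪ EqSet θ) := by
  refine unifies_union.mpr ⟨unifies_eqSet_iff.mpr fun x => ?_, unifies_eqSet_iff.mpr fun x => ?_⟩
  · by_cases hx : x ∈ U
    · refine FTerm.subst_congr _ fun v hv => (G.eta_of_notMem hsig U hdom fun hvU => ?_).symm
      obtain ⟨n, rfl⟩ : v ∈ Set.range (G.fresh U) :=
        by_contra fun h => hv (G.occ_delta_eq_zero hsig U hx h)
      exact G.fresh_notMem U n hvU
    · rw [G.delta_of_notMem hsig U hdom hx]
      rfl
  · by_cases hx : x ∈ domS θ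
    · rw [G.eta_of_mem_domS hsig U hx]
      refine FTerm.subst_congr _ fun y hy => ?_
      have hy' := mem_rngS_of_occ hx hy
      exact (G.eta_of_notMem_domS hsig U (notMem_domS_of_mem_rngS hidem hy') (hrng hy')).symm
    · rw [show θ x = FTerm.var x from not_not.mp hx]
      rfl

section Unifier

variable {τ : ℕ → FTerm Sig ar} (hδ : ∀ x, τ x = (G.delta hsig U x).subst τ)
  (hθ : ∀ x, τ x = (θ x).subst τ)
include hδ hθ

/-- Comparing `τ (δ u) = τ (θ u)` slot by slot matches the source of each edge of layer `u`
with its target. -/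
theorem unifier_fresh_src_eq_tgt (hrng : rngS θ ⊆ U) (hidem : Idem θ) (e : G.E) :
    τ (G.fresh U (G.src e)) = τ (G.fresh U (G.tgt e)) := by
  set u := G.layer e
  have hu : u ∈ domS θ := G.layer_mem e
  have h : (G.delta hsig U u).subst τ = (θ u).subst fun y => (G.delta hsig U y).subst τ := by
    rw [← hδ u, hθ u, ← funext hδ]
  rw [G.delta_of_mem_domS hsig U hu, FTerm.subst_fill, FTerm.subst_eq_fill] at h
  have key : ∀ s, τ (G.fresh U (G.src (G.slotEdge hu s).1)) =
      τ (G.fresh U (G.tgt (G.slotEdge hu s).1)) := by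
    rintro ⟨p, i⟩
    have hp := congrFun (FTerm.fill_injective _ h) p
    have hy := mem_rngS_of_occ hu (FTerm.occ_varAt_ne_zero _ p)
    simp only [Function.comp_apply, freshTerm_subst,
      G.delta_of_notMem_domS hsig U (notMem_domS_of_mem_rngS hidem hy) (hrng hy)] at hp
    rw [G.tgt_slotEdge hu]
    exact congrFun (FTerm.mk_injective hsig _ hp) i
  simpa using key ((G.slotEdge hu).symm ⟨e, rfl⟩)

theorem unifier_fresh_eq_hub (hrng : rngS θ ⊆ U) (hidem : Idem θ) (n : G.N) :
    τ (G.fresh U n) = τ (G.hub U) := by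
  suffices ∀ m, Relation.ReflTransGen _ n m → τ (G.fresh U n) = τ (G.fresh U m) from
    this _ (G.conn n _)
  intro m hm
  induction hm with
  | refl => rfl
  | tail _ hbc ih =>
    obtain ⟨e, ⟨rfl, rfl⟩ | ⟨rfl, rfl⟩⟩ := hbc
    · exact ih.trans (G.unifier_fresh_src_eq_tgt hsig U hδ hθ hrng hidem e)
    · exact ih.trans (G.unifier_fresh_src_eq_tgt hsig U hδ hθ hrng hidem e).symm

end Unifier

theorem subst_collapse_subst {τ : ℕ → FTerm Sig ar} (hτ : ∀ n, τ (G.fresh U n) = τ (G.hub U))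
    (t : FTerm Sig ar) : (t.subst (G.collapse U)).subst τ = t.subst τ := by
  rw [FTerm.subst_subst]
  refine congrArg (t.subst ·) (funext fun y => ?_)
  by_cases hy : y ∈ Set.range (G.fresh U)
  · obtain ⟨n, rfl⟩ := hy
    rw [collapse_fresh]
    exact (hτ n).symm
  · rw [G.collapse_of_notMem_range U hy]
    rfl

theorem isMGU_eta (hdom : domS θ ⊆ U) (hrng : rngS θ ⊆ U) (hidem : Idem θ) :
    IsMGU (G.eta hsig U) (EqSet (G.delta hsig U) ∪ EqSet θ) := by
  refine ⟨G.unifies_eta hsig U hdom hrng hidem, fun τ hτ => ⟨τ, fun x => ?_⟩⟩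
  obtain ⟨hδ, hθ⟩ := unifies_union.mp hτ
  rw [unifies_eqSet_iff] at hδ hθ
  rw [eta, G.subst_collapse_subst U (G.unifier_fresh_eq_hub hsig U hδ hθ hrng hidem)]
  exact hδ x

end PSG

theorem mguP_optimal_of_vars_subset_general (Sig : Type) (ar : Sig → ℕ)
    (hsig : ∀ k : ℕ, ∃ f : Sig, ar f = k)
    (U : Finset ℕ) (S : Set (ℕ →₀ ℕ))
    (hS0 : (0 : ℕ →₀ ℕ) ∈ S)
    (hSU : ∀ B ∈ S, ∀ v ∈ (B : ℕ →₀ ℕ).support, v ∈ U)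
    (θ : ℕ → FTerm Sig ar) (hidem : Idem θ)
    (hθU : varsS θ ⊆ ↑U)
    (B : ℕ →₀ ℕ) (hB : B ∈ mguP S θ) :
    ∃ δ : ℕ → FTerm Sig ar,
      (domS δ).Finite ∧ Idem δ ∧
      varsS δ ∩ varsS θ ⊆ ↑U ∧
      rngS δ ∩ ↑U = ∅ ∧
      (∀ v : ℕ, restr U (invSub δ v) ∈ S) ∧
      ∃ η : ℕ → FTerm Sig ar,
        (domS η).Finite ∧ Idem η ∧
        IsMGU η (EqSet δ ∪ EqSet θ) ∧
        ∃ w : ℕ, restr U (invSub η w) = B := by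
  obtain ⟨G, rfl⟩ := hB
  have hdom : domS θ ⊆ U := fun x hx => hθU (Or.inl hx)
  have hrng : rngS θ ⊆ U := fun x hx => hθU (Or.inr hx)
  refine ⟨G.delta hsig U, ?_, G.idem_delta hsig U hdom, fun v hv => hθU hv.2,
    G.rngS_delta_inter hsig U hdom, G.restr_invSub_delta_mem hsig U hS0 hSU,
    G.eta hsig U, G.domS_eta_finite hsig U hdom, G.idem_eta hsig U hdom,
    G.isMGU_eta hsig U hdom hrng hidem, G.hub U,
    restr_eq_of_support_subset (G.res_support_subset U hSU) fun v hv => G.occ_hub_eta hsig U hv⟩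
  rw [G.domS_delta hsig U hdom]
  exact U.finite_toSet

/-- Theorem 2 of the paper: optimality of parallel abstract
unification when all the variables of `θ` are variables of interest.  The
signature is assumed to contain a function symbol of each arity (as needed for
the construction in the paper).  For every `B ∈ mgu_p(S,θ)` there is a concrete
idempotent substitution `δ`, approximated by `S`, whose (idempotent) mgu `η`
with `θ` produces exactly the sharing group `B`. -/
theorem mguP_optimal_of_vars_subset (Sig : Type) (ar : Sig → ℕ)
    (hsig : ∀ k : ℕ, ∃ f : Sig, ar f = k)
    (U : Finset ℕ) (S : Set (ℕ →₀ ℕ))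
    (hS0 : (0 : ℕ →₀ ℕ) ∈ S)
    (hSU : ∀ B ∈ S, ∀ v ∈ (B : ℕ →₀ ℕ).support, v ∈ U)
    (θ : ℕ → FTerm Sig ar) (hfin : (domS θ).Finite) (hidem : Idem θ)
    (hθU : varsS θ ⊆ ↑U)
    (B : ℕ →₀ ℕ) (hB : B ∈ mguP S θ) :
    ∃ δ : ℕ → FTerm Sig ar,
      (domS δ).Finite ∧ Idem δ ∧
      varsS δ ∩ varsS θ ⊆ ↑U ∧
      rngS δ ∩ ↑U = ∅ ∧
      (∀ v : ℕ, restr U (invSub δ v) ∈ S) ∧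
      ∃ η : ℕ → FTerm Sig ar,
        (domS η).Finite ∧ Idem η ∧
        IsMGU η (EqSet δ ∪ EqSet θ) ∧
        ∃ w : ℕ, restr U (invSub η w) = B :=
  mguP_optimal_of_vars_subset_general Sig ar hsig U S hS0 hSU θ hidem hθU B hB
end
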